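/- Let Ω ⊆ ℝ^d be open, g, h : Ω → ℂ continuous, and τ ∈ D(Ω) a test function with compact support in Ω. Then for every n ∈ ℕ the set {φ ∈ D_0 : |∫_Ω ((g⊛φ)(x)·(h⊛φ)(x) − g(x)h(x))·τ(x) dx| < 1/n} belongs to U; that is, the pairing of E_Ω(g)E_Ω(h) − E_Ω(gh) with τ is an infinitesimal asymptotic number (the embedding preserves the multiplication of continuous functions up to weak association). -/

import Mathlib

/-!
For `φ ∈ D_m` with `m` large the support radius `R_φ` is small, so on the `R_φ`-neighbourhood of
`supp τ` the cut-off `C_{Ω,φ}` equals `∫ φ = 1` and `g ⊛ φ` is the plain convolution `g * φ`.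
As `∫ φ = 1` and `∫ |φ| ≤ 2`, `|(g * φ)(x) - g(x)|` is at most twice the oscillation of `g` on the
ball of radius `R_φ` around `x`, so uniform continuity of `g` near the compact set `supp τ` gives
`g ⊛ φ → g` uniformly on `supp τ` along `U`, and likewise for `h`. Products of uniformly convergent
families with bounded limits converge uniformly, and uniform convergence on the compact `supp τ`
passes to the integral.
-/

open MeasureTheory Filter

noncomputable section

/-- ℝ^d with the Euclidean norm. -/
abbrev Rd (d : ℕ) := EuclideanSpace ℝ (Fin d)

/-- The partial derivative in the `i`-th coordinate direction. -/
noncomputable def pderivI (d : ℕ) (i : Fin d) (f : Rd d → ℂ) : Rd d → ℂ :=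
  fun x => fderiv ℝ f x (EuclideanSpace.single i (1 : ℝ))

/-- The iterated partial derivative `∂^α` of multi-index order `α`. -/
noncomputable def multiDeriv (d : ℕ) (α : Fin d → ℕ) (f : Rd d → ℂ) : Rd d → ℂ :=
  ((List.ofFn fun i : Fin d => (pderivI d i)^[α i]).foldr (· ∘ ·) id) f

-- The radius of support `R_φ`.
open Classical in
noncomputable def radSupp (d : ℕ) (φ : Rd d → ℂ) : ℝ :=
  if φ = 0 then 1 else sSup {r : ℝ | ∃ x, φ x ≠ 0 ∧ r = ‖x‖}

/-- The type of test functions `D(ℝ^d)`: smooth compactly supported `φ : ℝ^d → ℂ`. -/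
def TestFun (d : ℕ) := {φ : Rd d → ℂ // ContDiff ℝ (⊤ : ℕ∞) φ ∧ HasCompactSupport φ}

/-- The directing set `D_n`. -/
def directingSet (d n : ℕ) : Set (TestFun d) :=
  {φ | (∀ x, (φ.1 x).im = 0) ∧
       (∀ x, φ.1 (-x) = φ.1 x) ∧
       radSupp d φ.1 ≤ 1 / n ∧
       (∫ x, φ.1 x) = 1 ∧
       (∀ α : Fin d → ℕ, 1 ≤ ∑ i, α i → ∑ i, α i ≤ n →
          (∫ x, (∏ i, (x i : ℂ) ^ α i) * φ.1 x) = 0) ∧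
       (∫ x, ‖φ.1 x‖) ≤ 1 + 1 / n ∧
       (∀ α : Fin d → ℕ, ∑ i, α i ≤ n → ∀ x,
          ‖multiDeriv d α φ.1 x‖ ≤ radSupp d φ.1 ^ (-(2 * ((∑ i, α i) + d) : ℤ)))}

end

noncomputable section

/-- `Ω̃_φ = {x ∈ Ω : dist(x, ∂Ω) > 2 R_φ and ‖x‖ < 1/R_φ}` (the distance to the boundary is
taken in `[0,∞]`, so that the condition holds vacuously when `∂Ω = ∅`). -/
def omegaTilde (d : ℕ) (Ω : Set (Rd d)) (φ : Rd d → ℂ) : Set (Rd d) :=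
  {x | x ∈ Ω ∧ ENNReal.ofReal (2 * radSupp d φ) < EMetric.infEdist x (frontier Ω) ∧
       ‖x‖ < 1 / radSupp d φ}

/-- The cut-off function `C_{Ω,φ}(x) = ∫_{Ω̃_φ} φ(x−t) dt`. -/
noncomputable def cutOff (d : ℕ) (Ω : Set (Rd d)) (φ : Rd d → ℂ) (x : Rd d) : ℂ :=
  ∫ t in omegaTilde d Ω φ, φ (x - t)

end

/-- The `φ`-regularization of a (locally integrable) function `f` on `Ω`:
`(f⊛φ)(x) = ∫_Ω f(t)·C_{Ω,φ}(t)·φ(x−t) dt`. -/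
noncomputable def freg (d : ℕ) (Ω : Set (Rd d)) (f : Rd d → ℂ) (φ : Rd d → ℂ)
    (x : Rd d) : ℂ :=
  ∫ t in Ω, f t * cutOff d Ω φ t * φ (x - t)

open Metric Topology

section UniformConvergence

variable {ι α : Type*} {l : Filter ι} {s : Set α}

theorem TendstoUniformlyOn.mul_of_bounded {R : Type*} [SeminormedRing R] {F G : ι → α → R}
    {f g : α → R} (hF : TendstoUniformlyOn F f l s) (hG : TendstoUniformlyOn G g l s)
    (hf : ∃ C, ∀ x ∈ s, ‖f x‖ ≤ C) (hg : ∃ C, ∀ x ∈ s, ‖g x‖ ≤ C) :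
    TendstoUniformlyOn (fun i x => F i x * G i x) (fun x => f x * g x) l s := by
  obtain ⟨Cf, hCf⟩ := hf
  obtain ⟨Cg, hCg⟩ := hg
  rw [Metric.tendstoUniformlyOn_iff] at hF hG ⊢
  intro ε hε
  set C := |Cf| + |Cg| + 1
  set η := min 1 (ε / (2 * C))
  have hC : 0 < C := by positivity
  have hη : 0 < η := lt_min one_pos (by positivity)
  have hηC : η * C < ε := by
    have := (le_div_iff₀ (by positivity)).mp (min_le_right 1 (ε / (2 * C)))
    linarith
  filter_upwards [hF η hη, hG η hη] with i hFi hGi x hx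
  have hFx : ‖f x - F i x‖ ≤ η := by rw [← dist_eq_norm]; exact (hFi x hx).le
  have hGx : ‖g x - G i x‖ < η := by rw [← dist_eq_norm]; exact hGi x hx
  have hFi_le : ‖F i x‖ ≤ |Cf| + η := by
    calc ‖F i x‖ = ‖f x - (f x - F i x)‖ := by rw [sub_sub_cancel]
      _ ≤ ‖f x‖ + ‖f x - F i x‖ := norm_sub_le _ _
      _ ≤ |Cf| + η := add_le_add ((hCf x hx).trans (le_abs_self Cf)) hFx
  rw [dist_eq_norm]
  calc ‖f x * g x - F i x * G i x‖ = ‖(f x - F i x) * g x + F i x * (g x - G i x)‖ := by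
        congr 1; noncomm_ring
    _ ≤ ‖f x - F i x‖ * ‖g x‖ + ‖F i x‖ * ‖g x - G i x‖ :=
        norm_add_le_of_le (norm_mul_le _ _) (norm_mul_le _ _)
    _ ≤ η * |Cg| + (|Cf| + η) * η := by
        gcongr
        exact (hCg x hx).trans (le_abs_self Cg)
    _ ≤ η * C := by nlinarith [min_le_left 1 (ε / (2 * C))]
    _ < ε := hηC

theorem TendstoUniformlyOn.tendsto_setIntegral_sub [MeasurableSpace α] {μ : Measure α}
    {E : Type*} [NormedAddCommGroup E] [NormedSpace ℝ E] {F : ι → α → E} {f : α → E}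
    (h : TendstoUniformlyOn F f l s) (hs : μ s < ⊤) :
    Tendsto (fun i => ∫ x in s, (F i x - f x) ∂μ) l (𝓝 0) := by
  rw [Metric.tendsto_nhds]
  intro ε hε
  have hη : 0 < ε / (μ.real s + 1) := by positivity
  filter_upwards [Metric.tendstoUniformlyOn_iff.mp h _ hη] with i hi
  rw [dist_zero_right]
  calc ‖∫ x in s, (F i x - f x) ∂μ‖ ≤ ε / (μ.real s + 1) * μ.real s :=
        norm_setIntegral_le_of_norm_le_const hs fun x hx => by
          rw [norm_sub_rev, ← dist_eq_norm]; exact (hi x hx).le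
    _ < ε := by
        rw [div_mul_eq_mul_div, div_lt_iff₀ (by positivity)]
        nlinarith [measureReal_nonneg (μ := μ) (s := s)]

end UniformConvergence

section RadiusOfSupport

variable {d : ℕ} {φ : Rd d → ℂ}

theorem norm_le_radSupp (hφ : HasCompactSupport φ) {x : Rd d} (hx : φ x ≠ 0) :
    ‖x‖ ≤ radSupp d φ := by
  have hne : φ ≠ 0 := fun h => hx (by simp [h])
  obtain ⟨C, hC⟩ := hφ.isBounded.exists_norm_le
  rw [radSupp, if_neg hne]
  exact le_csSup ⟨C, by rintro r ⟨y, hy, rfl⟩; exact hC y (subset_tsupport φ hy)⟩ ⟨x, hx, rfl⟩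

theorem radSupp_pos (hd : 0 < d) (hφ : HasCompactSupport φ) (hint : ∫ x, φ x ≠ 0) :
    0 < radSupp d φ := by
  have : Nonempty (Fin d) := ⟨⟨0, hd⟩⟩
  obtain ⟨x, hx, hx0⟩ : ∃ x, φ x ≠ 0 ∧ x ≠ 0 := by
    by_contra! h
    refine hint (integral_eq_zero_of_ae ?_)
    refine measure_mono_null (fun x hx => ?_) (measure_singleton (0 : Rd d))
    exact h x hx
  exact (norm_pos_iff.mpr hx0).trans_le (norm_le_radSupp hφ hx)

end RadiusOfSupport

theorem ofReal_le_infEDist_frontier {X : Type*} [PseudoMetricSpace X] {Ω : Set X}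
    (hΩ : IsOpen Ω) {x : X} {ρ : ℝ} (h : ball x ρ ⊆ Ω) :
    ENNReal.ofReal ρ ≤ Metric.infEDist x (frontier Ω) := by
  refine Metric.le_infEDist.mpr fun y hy => ?_
  by_contra! hlt
  rw [hΩ.frontier_eq] at hy
  exact hy.2 (h (mem_ball'.mpr (edist_lt_ofReal.mp hlt)))

section Regularization

variable {d : ℕ} {Ω K : Set (Rd d)}

theorem exists_cthickening_subset_omegaTilde (hΩ : IsOpen Ω) (hK : IsCompact K) (hKΩ : K ⊆ Ω) :
    ∃ r > 0, ∀ φ : Rd d → ℂ, 0 < radSupp d φ → radSupp d φ < r →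
      cthickening (2 * radSupp d φ) K ⊆ omegaTilde d Ω φ := by
  obtain ⟨δ, hδ, hδΩ⟩ := hK.exists_cthickening_subset_open hΩ hKΩ
  obtain ⟨M, hM⟩ := (hK.cthickening (r := δ)).isBounded.exists_norm_le
  -- `δ / 4` gives `2 R < δ - 2 R ≤ dist(s, ∂Ω)`, and `1 / (|M| + 1)` gives `‖s‖ ≤ M < 1 / R`.
  refine ⟨min (δ / 4) (1 / (|M| + 1)), by positivity, fun φ hR hRr => ?_⟩
  set R := radSupp d φ
  have hRδ : R < δ / 4 := hRr.trans_le (min_le_left _ _)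
  have hRM : R ≤ 1 / (|M| + 1) := hRr.le.trans (min_le_right _ _)
  intro s hs
  have hball : ball s (δ - 2 * R) ⊆ cthickening δ K := fun y hy => by
    have hy' : y ∈ cthickening (δ - 2 * R) (cthickening (2 * R) K) :=
      mem_cthickening_of_dist_le y s _ _ hs (mem_ball.mp hy).le
    have := cthickening_cthickening_subset (by linarith) (by linarith) K hy'
    rwa [sub_add_cancel] at this
  refine ⟨hδΩ (hball (mem_ball_self (by linarith))), ?_, ?_⟩
  · calc ENNReal.ofReal (2 * R) < ENNReal.ofReal (δ - 2 * R) :=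
          (ENNReal.ofReal_lt_ofReal_iff (by linarith)).mpr (by linarith)
      _ ≤ _ := ofReal_le_infEDist_frontier hΩ (hball.trans hδΩ)
  · calc ‖s‖ ≤ |M| := (hM s (hball (mem_ball_self (by linarith)))).trans (le_abs_self M)
      _ < |M| + 1 := lt_add_one _
      _ ≤ 1 / R := (le_one_div (by positivity : (0 : ℝ) < |M| + 1) hR).mpr hRM

theorem cutOff_eq_integral {φ : Rd d → ℂ} {t : Rd d}
    (h : ∀ s, φ (t - s) ≠ 0 → s ∈ omegaTilde d Ω φ) : cutOff d Ω φ t = ∫ x, φ x := by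
  rw [cutOff, setIntegral_eq_integral_of_forall_compl_eq_zero fun s hs => not_not.mp
    (mt (h s) hs), integral_sub_left_eq_self]

theorem freg_eq_integral {f φ : Rd d → ℂ} {x : Rd d}
    (h : ∀ t, φ (x - t) ≠ 0 → t ∈ Ω ∧ cutOff d Ω φ t = 1) :
    freg d Ω f φ x = ∫ t, f t * φ (x - t) := by
  have hcut : ∀ t, f t * cutOff d Ω φ t * φ (x - t) = f t * φ (x - t) := fun t => by
    by_cases ht : φ (x - t) = 0
    · simp [ht]
    · rw [(h t ht).2, mul_one]
  rw [freg, setIntegral_eq_integral_of_forall_compl_eq_zero fun t ht => ?_]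
  · simp_rw [hcut]
  · by_contra hne
    exact ht (h t (right_ne_zero_of_mul hne)).1

theorem exists_freg_eq_integral (hΩ : IsOpen Ω) (hK : IsCompact K) (hKΩ : K ⊆ Ω) :
    ∃ r > 0, ∀ φ : Rd d → ℂ, HasCompactSupport φ → ∫ y, φ y = 1 → 0 < radSupp d φ →
      radSupp d φ < r → ∀ f, ∀ x ∈ K, freg d Ω f φ x = ∫ t, f t * φ (x - t) := by
  obtain ⟨r, hr, hsub⟩ := exists_cthickening_subset_omegaTilde hΩ hK hKΩ
  refine ⟨r, hr, fun φ hφ hφ1 hR hRr f x hx => freg_eq_integral fun t ht => ?_⟩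
  set R := radSupp d φ
  have hnear : ∀ {a b}, φ (a - b) ≠ 0 → dist b a ≤ R := fun h => by
    rw [dist_comm, dist_eq_norm]; exact norm_le_radSupp hφ h
  have ht' : t ∈ cthickening R K := mem_cthickening_of_dist_le t x R K hx (hnear ht)
  have hsupp : ∀ s, φ (t - s) ≠ 0 → s ∈ omegaTilde d Ω φ := fun s hs => by
    refine hsub φ hR hRr ?_
    rw [two_mul]
    exact cthickening_cthickening_subset hR.le hR.le K
      (mem_cthickening_of_dist_le s t R _ ht' (hnear hs))
  exact ⟨(hsub φ hR hRr (cthickening_mono (by linarith) K ht')).1,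
    (cutOff_eq_integral hsupp).trans hφ1⟩

end Regularization

theorem norm_integral_mul_sub_le {G : Type*} [NormedAddCommGroup G] [MeasurableSpace G]
    [BorelSpace G] [ProperSpace G] {μ : Measure G} [μ.IsAddLeftInvariant] [μ.IsNegInvariant]
    [IsFiniteMeasureOnCompacts μ] {f φ : G → ℂ} {x : G} {R ε : ℝ} (hφ : Continuous φ)
    (hφR : ∀ y, φ y ≠ 0 → ‖y‖ ≤ R) (hφ1 : ∫ y, φ y ∂μ = 1)
    (hf : ContinuousOn f (closedBall x R)) (hfε : ∀ t ∈ closedBall x R, ‖f t - f x‖ ≤ ε) :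
    ‖(∫ t, f t * φ (x - t) ∂μ) - f x‖ ≤ ε * ∫ y, ‖φ y‖ ∂μ := by
  have hball : ∀ t, φ (x - t) ≠ 0 → t ∈ closedBall x R := fun t ht => by
    rw [mem_closedBall, dist_eq_norm, norm_sub_rev]; exact hφR _ ht
  have hφx : Integrable (fun t => φ (x - t)) μ :=
    (hφ.integrable_of_hasCompactSupport (HasCompactSupport.intro (isCompact_closedBall 0 R)
      fun y hy => not_not.mp fun h => hy (mem_closedBall_zero_iff.mpr (hφR y h)))).comp_sub_left x
  have hfφ : Integrable (fun t => f t * φ (x - t)) μ :=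
    ((hf.mul (hφ.comp (continuous_sub_left x)).continuousOn).integrableOn_compact
      (isCompact_closedBall x R)).integrable_of_forall_notMem_eq_zero fun t ht =>
        not_not.mp fun h => ht (hball t (right_ne_zero_of_mul h))
  have hsplit : (∫ t, f t * φ (x - t) ∂μ) - f x = ∫ t, (f t - f x) * φ (x - t) ∂μ := by
    simp_rw [sub_mul]
    rw [integral_sub hfφ (hφx.const_mul (f x)), integral_const_mul,
      integral_sub_left_eq_self φ μ x, hφ1, mul_one]
  have hpt : ∀ t, ‖(f t - f x) * φ (x - t)‖ ≤ ε * ‖φ (x - t)‖ := fun t => by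
    by_cases ht : φ (x - t) = 0
    · simp [ht]
    · rw [norm_mul]
      exact mul_le_mul_of_nonneg_right (hfε t (hball t ht)) (norm_nonneg _)
  calc ‖(∫ t, f t * φ (x - t) ∂μ) - f x‖ ≤ ∫ t, ε * ‖φ (x - t)‖ ∂μ := by
        rw [hsplit]
        exact norm_integral_le_of_norm_le (hφx.norm.const_mul ε) (Eventually.of_forall hpt)
    _ = ε * ∫ y, ‖φ y‖ ∂μ := by
        rw [integral_const_mul, integral_sub_left_eq_self (fun y => ‖φ y‖) μ x]

theorem tendstoUniformlyOn_freg {d : ℕ} (hd : 0 < d) {Ω K : Set (Rd d)} (hΩ : IsOpen Ω)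
    {f : Rd d → ℂ} (hf : ContinuousOn f Ω) (hK : IsCompact K) (hKΩ : K ⊆ Ω)
    {L : Filter (TestFun d)} (hL : ∀ n : ℕ, 1 ≤ n → directingSet d n ∈ L) :
    TendstoUniformlyOn (fun φ : TestFun d => freg d Ω f φ.1) f L K := by
  obtain ⟨r, hr, hfreg⟩ := exists_freg_eq_integral hΩ hK hKΩ
  obtain ⟨δ, hδ, hδΩ⟩ := hK.exists_cthickening_subset_open hΩ hKΩ
  rw [Metric.tendstoUniformlyOn_iff]
  intro ε hε
  obtain ⟨η, hη, hfη⟩ := Metric.uniformContinuousOn_iff.mp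
    (hK.cthickening.uniformContinuousOn_of_continuous (hf.mono hδΩ)) (ε / 3) (by positivity)
  obtain ⟨m, hm⟩ := exists_nat_one_div_lt (lt_min hr (lt_min hδ hη))
  have hm1 : (1 : ℝ) / (m + 1 : ℕ) ≤ 1 := by
    rw [div_le_one (by positivity)]; exact_mod_cast Nat.le_add_left 1 m
  filter_upwards [hL (m + 1) (Nat.le_add_left 1 m)] with φ hφ x hx
  obtain ⟨-, -, hRm, hφ1, -, hφabs, -⟩ := hφ
  set R := radSupp d φ.1
  have hR : R < min r (min δ η) := hRm.trans_lt (by exact_mod_cast hm)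
  simp only [lt_min_iff] at hR
  obtain ⟨hRr, hRδ, hRη⟩ := hR
  have hRpos : 0 < R := radSupp_pos hd φ.2.2 (by rw [hφ1]; exact one_ne_zero)
  have hball : closedBall x R ⊆ cthickening δ K := fun t ht =>
    cthickening_mono hRδ.le K (mem_cthickening_of_dist_le t x R K hx ht)
  have hclose : ∀ t ∈ closedBall x R, ‖f t - f x‖ ≤ ε / 3 := fun t ht => by
    rw [← dist_eq_norm]
    exact (hfη t (hball ht) x (hball (mem_closedBall_self hRpos.le))
      ((mem_closedBall.mp ht).trans_lt hRη)).le
  rw [dist_comm, dist_eq_norm, hfreg φ.1 φ.2.2 hφ1 hRpos hRr f x hx]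
  calc ‖(∫ t, f t * φ.1 (x - t)) - f x‖ ≤ ε / 3 * ∫ y, ‖φ.1 y‖ :=
        norm_integral_mul_sub_le φ.2.1.continuous (fun y hy => norm_le_radSupp φ.2.2 hy) hφ1
          ((hf.mono hδΩ).mono hball) hclose
    _ ≤ ε / 3 * 2 := by gcongr; linarith
    _ < ε := by linarith

/-- for continuous `g, h` on `Ω` and a test function `τ` supported in `Ω`,
for every `n ≥ 1` the set `{φ : |∫_Ω ((g⊛φ)(h⊛φ) − gh)·τ| < 1/n}` belongs to `U`;
i.e. the pairing of `E_Ω(g)E_Ω(h) − E_Ω(gh)` with `τ` is infinitesimal. -/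
theorem embedding_preserves_continuous_multiplication_up_to_association
    (d : ℕ) (hd : 0 < d) (Ω : Set (Rd d)) (hΩ : IsOpen Ω)
    (g h : Rd d → ℂ) (hg : ContinuousOn g Ω) (hh : ContinuousOn h Ω)
    (τ : Rd d → ℂ) (hτ : ContDiff ℝ (⊤ : ℕ∞) τ ∧ HasCompactSupport τ ∧ tsupport τ ⊆ Ω)
    (U : Ultrafilter (TestFun d)) (hU : ∀ n : ℕ, 1 ≤ n → directingSet d n ∈ U)
    (n : ℕ) (hn : 1 ≤ n) :
    {φ : TestFun d |
      ‖∫ x in Ω,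
        (freg d Ω g φ.1 x * freg d Ω h φ.1 x - g x * h x) * τ x‖ < 1 / n} ∈ U := by
  obtain ⟨hτ_smooth, hτ_supp, hτΩ⟩ := hτ
  have hK : IsCompact (tsupport τ) := hτ_supp
  have hbdd : ∀ {f : Rd d → ℂ}, ContinuousOn f Ω → ∃ C, ∀ x ∈ tsupport τ, ‖f x‖ ≤ C :=
    fun hf => hK.exists_bound_of_continuousOn (hf.mono hτΩ)
  have hτ_const : TendstoUniformlyOn (fun (_ : TestFun d) => τ) τ U (tsupport τ) :=
    Metric.tendstoUniformlyOn_iff.mpr fun ε hε => by simp [hε]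
  have hprod := (((tendstoUniformlyOn_freg hd hΩ hg hK hτΩ hU).mul_of_bounded
    (tendstoUniformlyOn_freg hd hΩ hh hK hτΩ hU) (hbdd hg) (hbdd hh)).mul_of_bounded hτ_const
    (hbdd (hg.mul hh)) (hbdd hτ_smooth.continuous.continuousOn))
  have hn' : (0 : ℝ) < 1 / n := one_div_pos.mpr (Nat.cast_pos.mpr hn)
  have hlim := hprod.tendsto_setIntegral_sub (hK.measure_lt_top (μ := volume))
  filter_upwards [Metric.tendsto_nhds.mp hlim _ hn'] with φ hφ
  rw [setIntegral_eq_of_subset_of_forall_sdiff_eq_zero hΩ.measurableSet hτΩ fun x hx => by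
    rw [image_eq_zero_of_notMem_tsupport hx.2, mul_zero]]
  simpa only [dist_zero_right, sub_mul] using hφ
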